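/- arXiv:2503.18607 — 2 statements merged into one kernel-verified Lean document; each statement's English description precedes it below -/
import Mathlib

section
/- Policy improvement for SNS-MDPs: if Q^{SNS,μ}(s, μ') ≥ v^{SNS,μ}(s) for all states s, then v^{SNS,μ'}(s) ≥ v^{SNS,μ}(s) for all s, where Q^{SNS,μ}(s,μ') = E_{a~μ'(·|s)}[Q^{SNS,μ}(s,a)]. -/
/-- Policy improvement for SNS-MDPs: if
`Q^{SNS,μ}(s,μ') = ∑_a μ'(a|s) Q^{SNS,μ}(s,a) ≥ v^{SNS,μ}(s)` for all states `s`,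
then `v^{SNS,μ'}(s) ≥ v^{SNS,μ}(s)` for all `s`. -/
theorem sns_policy_improvement
    {S A : Type*} [Fintype S] [Fintype A]
    (γ : ℝ) (hγ0 : 0 ≤ γ) (hγ1 : γ < 1)
    -- averaged transitions and rewards of the SNS-MDP:
    (p : S → A → S → ℝ) (hp0 : ∀ s a s', 0 ≤ p s a s') (hp1 : ∀ s a, ∑ s', p s a s' = 1)
    (rE : S → A → ℝ)
    -- two policies:
    (μ μ' : S → A → ℝ) (hμ0 : ∀ s a, 0 ≤ μ s a) (hμ1 : ∀ s, ∑ a, μ s a = 1)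
    (hμ'0 : ∀ s a, 0 ≤ μ' s a) (hμ'1 : ∀ s, ∑ a, μ' s a = 1)
    -- the SNS value functions of `μ` and `μ'`, characterized by their Bellman equations:
    (v v' : S → ℝ)
    (hv : ∀ s, v s = (∑ a, μ s a * rE s a) +
      γ * ∑ s', (∑ a, μ s a * p s a s') * v s')
    (hv' : ∀ s, v' s = (∑ a, μ' s a * rE s a) +
      γ * ∑ s', (∑ a, μ' s a * p s a s') * v' s')
    -- the SNS Q-function of `μ`:
    (Q : S → A → ℝ)
    (hQ : ∀ s a, Q s a = rE s a + γ * ∑ s', p s a s' * v s')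
    -- improvement hypothesis:
    (himp : ∀ s, v s ≤ ∑ a, μ' s a * Q s a) :
    ∀ s, v s ≤ v' s := by
  intro s
  set u : S → ℝ := fun t => v t - v' t with hu
  have key : ∀ t, u t ≤ γ * ∑ s', (∑ a, μ' t a * p t a s') * u s' := by
    intro t
    have expand : ∑ a, μ' t a * Q t a =
        (∑ a, μ' t a * rE t a) + γ * ∑ s', (∑ a, μ' t a * p t a s') * v s' := by
      simp only [hQ, mul_add, Finset.sum_add_distrib]
      congr 1
      calc ∑ a, μ' t a * (γ * ∑ s', p t a s' * v s')
          = ∑ a, ∑ s', γ * (μ' t a * p t a s' * v s') := by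
            refine Finset.sum_congr rfl fun a _ => ?_
            rw [Finset.mul_sum, Finset.mul_sum]
            exact Finset.sum_congr rfl fun s' _ => by ring
        _ = ∑ s', ∑ a, γ * (μ' t a * p t a s' * v s') := Finset.sum_comm
        _ = γ * ∑ s', (∑ a, μ' t a * p t a s') * v s' := by
            rw [Finset.mul_sum]
            refine Finset.sum_congr rfl fun s' _ => ?_
            simp only [Finset.sum_mul, Finset.mul_sum]
    have h1 : v t ≤ (∑ a, μ' t a * rE t a) + γ * ∑ s', (∑ a, μ' t a * p t a s') * v s' := by
      rw [← expand]; exact himp t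
    have h2 := hv' t
    have hsub : (∑ s', (∑ a, μ' t a * p t a s') * v s')
        - (∑ s', (∑ a, μ' t a * p t a s') * v' s')
        = ∑ s', (∑ a, μ' t a * p t a s') * u s' := by
      rw [← Finset.sum_sub_distrib]
      exact Finset.sum_congr rfl fun s' _ => by simp [hu]; ring
    have : u t ≤ γ * ((∑ s', (∑ a, μ' t a * p t a s') * v s')
        - (∑ s', (∑ a, μ' t a * p t a s') * v' s')) := by
      simp only [hu]
      nlinarith [h1, h2]
    rwa [hsub] at this
  obtain ⟨t0, -, ht0⟩ := Finset.exists_max_image (Finset.univ : Finset S) u ⟨s, Finset.mem_univ s⟩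
  have hPnn : ∀ t s', 0 ≤ ∑ a, μ' t a * p t a s' := fun t s' =>
    Finset.sum_nonneg fun a _ => mul_nonneg (hμ'0 t a) (hp0 t a s')
  have hPsum : ∀ t : S, ∑ s', (∑ a, μ' t a * p t a s') = 1 := by
    intro t
    rw [Finset.sum_comm]
    calc ∑ a, ∑ s', μ' t a * p t a s'
        = ∑ a, μ' t a := by
          refine Finset.sum_congr rfl fun a _ => ?_
          rw [← Finset.mul_sum, hp1, mul_one]
      _ = 1 := hμ'1 t
  have hbound : u t0 ≤ γ * u t0 := by
    calc u t0 ≤ γ * ∑ s', (∑ a, μ' t0 a * p t0 a s') * u s' := key t0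
      _ ≤ γ * ∑ s', (∑ a, μ' t0 a * p t0 a s') * u t0 := by
          refine mul_le_mul_of_nonneg_left ?_ hγ0
          exact Finset.sum_le_sum fun s' _ =>
            mul_le_mul_of_nonneg_left (ht0 s' (Finset.mem_univ s')) (hPnn t0 s')
      _ = γ * u t0 := by rw [← Finset.sum_mul, hPsum, one_mul]
  have hle : u t0 ≤ 0 := by nlinarith
  have := ht0 s (Finset.mem_univ s)
  have : u s ≤ 0 := le_trans this hle
  simpa [hu] using this
end

section
/- Let D = Diag(π) where π is a probability vector with strictly positive entries, and let Π be a row-stochastic matrix satisfying π^T Π = π^T. Then for γ ∈ [0,1), the matrix A = γ D Π − D is negative definite: w^T A w ≤ (γ − 1) w^T D w < 0 for all nonzero w ∈ ℝ^n. -/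
open Matrix
/-- Let `D = Diag(π)` with `π` a strictly positive probability vector, and let
`Π` be a row-stochastic matrix with `πᵀ Π = πᵀ`. For `γ ∈ [0,1)`, the matrix
`A = γ D Π - D` is negative definite:
`wᵀ A w ≤ (γ - 1) wᵀ D w < 0` for every nonzero `w`. -/
theorem td_matrix_negative_definite {n : ℕ}
    (π : Fin n → ℝ) (hπ0 : ∀ i, 0 < π i) (hπ1 : ∑ i, π i = 1)
    (Pi : Matrix (Fin n) (Fin n) ℝ)
    (hPi0 : ∀ i j, 0 ≤ Pi i j) (hPi1 : ∀ i, ∑ j, Pi i j = 1)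
    (hstat : ∀ j, ∑ i, π i * Pi i j = π j)
    (γ : ℝ) (hγ0 : 0 ≤ γ) (hγ1 : γ < 1)
    (w : Fin n → ℝ) (hw : w ≠ 0) :
    w ⬝ᵥ ((γ • (Matrix.diagonal π * Pi) - Matrix.diagonal π).mulVec w) ≤
        (γ - 1) * (w ⬝ᵥ ((Matrix.diagonal π).mulVec w)) ∧
      w ⬝ᵥ ((γ • (Matrix.diagonal π * Pi) - Matrix.diagonal π).mulVec w) < 0 := by
  classical
  set v : Fin n → ℝ := fun i => ∑ j, Pi i j * w j with hv
  set S : ℝ := ∑ i, π i * w i ^ 2 with hSdef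
  have hS : 0 < S := by
    obtain ⟨k, hk⟩ := Function.ne_iff.mp hw
    refine Finset.sum_pos' (fun i _ => mul_nonneg (hπ0 i).le (sq_nonneg _)) ⟨k, Finset.mem_univ k, ?_⟩
    have h2 : w k ≠ 0 := hk
    exact mul_pos (hπ0 k) (pow_two_pos_of_ne_zero h2)
  -- Jensen / Cauchy–Schwarz: (v i)^2 ≤ ∑ j, Pi i j * w j ^ 2
  have h1 : ∀ i, (v i) ^ 2 ≤ ∑ j, Pi i j * w j ^ 2 := by
    intro i
    have := Finset.sum_sq_le_sum_mul_sum_of_sq_eq_mul Finset.univ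
      (r := fun j => Pi i j * w j) (f := fun j => Pi i j)
      (g := fun j => Pi i j * w j ^ 2)
      (fun j _ => hPi0 i j) (fun j _ => by have := hPi0 i j; positivity)
      (fun j _ => by ring)
    simpa [hPi1 i] using this
  -- contraction: ∑ i, π i * (v i)^2 ≤ S
  have step1 : ∑ i, π i * (v i) ^ 2 ≤ S := by
    calc ∑ i, π i * (v i) ^ 2 ≤ ∑ i, π i * ∑ j, Pi i j * w j ^ 2 := by
          exact Finset.sum_le_sum fun i _ =>
            mul_le_mul_of_nonneg_left (h1 i) (hπ0 i).le
      _ = ∑ i, ∑ j, π i * (Pi i j * w j ^ 2) := by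
          simp [Finset.mul_sum]
      _ = ∑ j, ∑ i, π i * (Pi i j * w j ^ 2) := by rw [Finset.sum_comm]
      _ = ∑ j, (∑ i, π i * Pi i j) * w j ^ 2 := by
          refine Finset.sum_congr rfl fun j _ => ?_
          rw [Finset.sum_mul]
          exact Finset.sum_congr rfl fun i _ => (mul_assoc _ _ _).symm
      _ = S := by simp [hstat, hSdef]
  -- T = ∑ π i * w i * v i ≤ S
  have hT : ∑ i, π i * (w i * v i) ≤ S := by
    have h2 : ∀ i, π i * (w i * v i) ≤ π i * ((w i ^ 2 + v i ^ 2) / 2) := by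
      intro i
      refine mul_le_mul_of_nonneg_left ?_ (hπ0 i).le
      nlinarith [sq_nonneg (w i - v i)]
    calc ∑ i, π i * (w i * v i) ≤ ∑ i, π i * ((w i ^ 2 + v i ^ 2) / 2) :=
          Finset.sum_le_sum fun i _ => h2 i
      _ = (S + ∑ i, π i * v i ^ 2) / 2 := by
          rw [hSdef, ← Finset.sum_add_distrib, Finset.sum_div]
          exact Finset.sum_congr rfl fun i _ => by ring
      _ ≤ (S + S) / 2 := by linarith
      _ = S := by ring
  -- rewrite quadratic forms as sums
  have hD : w ⬝ᵥ ((Matrix.diagonal π).mulVec w) = S := by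
    simp [dotProduct, mulVec_diagonal, hSdef]
    exact Finset.sum_congr rfl fun i _ => by ring
  have hA : w ⬝ᵥ ((γ • (Matrix.diagonal π * Pi) - Matrix.diagonal π).mulVec w)
      = γ * (∑ i, π i * (w i * v i)) - S := by
    rw [sub_mulVec, dotProduct_sub, hD]
    congr 1
    rw [smul_mulVec, dotProduct_smul, ← mulVec_mulVec]
    rw [smul_eq_mul]
    congr 1
    simp only [dotProduct, mulVec_diagonal]
    simp only [mulVec, dotProduct, hv]
    exact Finset.sum_congr rfl fun i _ => by ring
  have key : w ⬝ᵥ ((γ • (Matrix.diagonal π * Pi) - Matrix.diagonal π).mulVec w)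
      ≤ (γ - 1) * S := by
    rw [hA]
    have := mul_le_mul_of_nonneg_left hT hγ0
    nlinarith
  refine ⟨by rw [hD]; exact key, lt_of_le_of_lt key ?_⟩
  have : γ - 1 < 0 := by linarith
  exact mul_neg_of_neg_of_pos this hS
end
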